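/- arXiv:2107.03836 — 2 statements merged into one kernel-verified Lean document; each statement's English description precedes it below -/
import Mathlib

section
/- Let μ be a Borel probability measure on ℝ², let k, ℓ ≥ 2 and m ≥ 1 be integers, let Γ be an equipartition of μ into k·m rows and ℓ·m columns, and let D_n be the empirical measure of n iid points drawn from μ. Then with probability at least 1 − ℓ·m·exp(−n/(3ℓm)) − k·m·exp(−n/(3km)), the following holds simultaneously for every k×ℓ grid G: the Γ-boundary mass of D_n with respect to G is at most 4/m. -/
open MeasureTheory Finset

noncomputable section

/-- A grid with `r` rows and `c` columns on ℝ², given by `r - 1` strictly increasing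
row cut points and `c - 1` strictly increasing column cut points. -/
structure Grid (r c : ℕ) where
  rowCuts : Fin (r - 1) → ℝ
  colCuts : Fin (c - 1) → ℝ
  rowCuts_mono : StrictMono rowCuts
  colCuts_mono : StrictMono colCuts

/-- Interval number `i` of the partition of ℝ induced by the cut points `cuts`:
`[cuts (i-1), cuts i)`, with the first interval unbounded below and the last
unbounded above. -/
def cutInterval {m : ℕ} (cuts : Fin (m - 1) → ℝ) (i : Fin m) : Set ℝ :=
  {t | (∀ j : Fin (m - 1), (j : ℕ) < (i : ℕ) → cuts j ≤ t) ∧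
       (∀ j : Fin (m - 1), (i : ℕ) ≤ (j : ℕ) → t < cuts j)}

/-- Cell `(i, j)` (row `i`, column `j`) of a grid, as a subset of ℝ². -/
def Grid.cell {r c : ℕ} (G : Grid r c) (i : Fin r) (j : Fin c) : Set (ℝ × ℝ) :=
  {p | p.1 ∈ cutInterval G.colCuts j ∧ p.2 ∈ cutInterval G.rowCuts i}

/-- The probability mass function on `{1,…,r} × {1,…,c}` induced by a measure `ν`
on a grid `G`: it assigns to `(i, j)` the `ν`-measure of cell `(i, j)`. -/
def gridPMF {r c : ℕ} (ν : Measure (ℝ × ℝ)) (G : Grid r c) (i : Fin r) (j : Fin c) : ℝ :=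
  (ν (G.cell i j)).toReal

open Classical in
/-- The empirical measure of the sample `ω`, as a real-valued set function. -/
def empMeas {n : ℕ} (ω : Fin n → ℝ × ℝ) (S : Set (ℝ × ℝ)) : ℝ :=
  ((Finset.univ.filter (fun i => ω i ∈ S)).card : ℝ) / n

/-- The pmf on cells induced by the empirical measure of the sample `ω`. -/
def empGridPMF {n r c : ℕ} (ω : Fin n → ℝ × ℝ) (G : Grid r c) (i : Fin r) (j : Fin c) : ℝ :=
  empMeas ω (G.cell i j)

/-- Mutual information (base 2) of a pmf `p` on `Fin r × Fin c`, with the convention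
that terms with `p i j = 0` vanish. -/
def MI {r c : ℕ} (p : Fin r → Fin c → ℝ) : ℝ :=
  ∑ i, ∑ j, if p i j = 0 then 0
    else p i j * Real.logb 2 (p i j / ((∑ j', p i j') * (∑ i', p i' j)))


/-- A cell `(i, j)` of the grid `Γ` is `G`-split if it is not contained within a
single cell of `G`. -/
def IsSplit {R S k l : ℕ} (Γ : Grid R S) (G : Grid k l) (i : Fin R) (j : Fin S) : Prop :=
  ¬ ∃ (i' : Fin k) (j' : Fin l), Γ.cell i j ⊆ G.cell i' j'

open Classical in
/-- The `Γ`-boundary mass of a (real-valued set function standing for a) measure `f`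
with respect to `G`: the total `f`-mass of the `G`-split cells of `Γ`. -/
def boundaryMass {R S k l : ℕ} (f : Set (ℝ × ℝ) → ℝ) (Γ : Grid R S) (G : Grid k l) : ℝ :=
  ∑ i, ∑ j, if IsSplit Γ G i j then f (Γ.cell i j) else 0

/-- `Γ` is an equipartition of `μ` into `R` rows and `S` columns if every row of
`μ|_Γ` has total mass `1/R` and every column has total mass `1/S`. -/
def IsEquipartition (μ : Measure (ℝ × ℝ)) {R S : ℕ} (Γ : Grid R S) : Prop :=
  (∀ i, ∑ j, gridPMF μ Γ i j = 1 / (R : ℝ)) ∧ (∀ j, ∑ i, gridPMF μ Γ i j = 1 / (S : ℝ))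

/-!
A cell of `Γ` is split by `G` only if its row interval or its column interval contains a cut
point of `G`. Every cut point lies in exactly one interval, so at most `k - 1` rows and `l - 1`
columns of `Γ` are split. Hence, as soon as every row of `Γ` carries empirical mass at most twice
its true mass `1 / (k m)` and every column at most `2 / (l m)`, the split cells of `Γ` weigh at
most `(k - 1) · 2 / (k m) + (l - 1) · 2 / (l m) ≤ 4 / m`, for all grids `G` at once. A
multiplicative Chernoff bound makes each row fail with probability at most `exp (-n / (3 k m))`
and each column with probability at most `exp (-n / (3 l m))`; a union bound over the `k m`
rows and `l m` columns concludes.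
-/

open Function

section CutInterval

variable {N : ℕ} {cuts : Fin (N - 1) → ℝ}

lemma pairwise_disjoint_cutInterval : Pairwise (Disjoint on cutInterval cuts) := by
  refine (pairwise_disjoint_on _).2 fun a b hab => ?_
  have ha : (a : ℕ) < N - 1 := by have := b.isLt; have : (a : ℕ) < b := hab; omega
  exact Set.disjoint_left.2 fun t ht ht' => (ht.2 ⟨a, ha⟩ le_rfl).not_ge (ht'.1 ⟨a, ha⟩ hab)

lemma exists_mem_cutInterval (hN : 0 < N) (hcuts : Monotone cuts) (t : ℝ) :
    ∃ i, t ∈ cutInterval cuts i := by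
  classical
  by_cases hB : ({j | cuts j ≤ t} : Finset (Fin (N - 1))).Nonempty
  · set j₀ := max' _ hB
    have hj₀ : cuts j₀ ≤ t := (mem_filter.1 (max'_mem _ hB)).2
    refine ⟨⟨j₀ + 1, by omega⟩, fun j hj => (hcuts ?_).trans hj₀, fun j hj => ?_⟩
    · exact Fin.le_def.2 (by simp only at hj; omega)
    · by_contra! h
      have := le_max' ({j | cuts j ≤ t} : Finset (Fin (N - 1))) j (by simpa using h)
      simp only [Fin.le_def] at hj this
      omega
  · refine ⟨⟨0, hN⟩, fun j hj => absurd hj (Nat.not_lt_zero _), fun j _ => ?_⟩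
    by_contra! h
    exact hB ⟨j, by simpa using h⟩

lemma cutInterval_nonempty (hcuts : StrictMono cuts) (i : Fin N) :
    (cutInterval cuts i).Nonempty := by
  rcases Nat.eq_zero_or_pos (N - 1) with h0 | hpos
  · exact ⟨0, fun j _ => absurd j.isLt (by omega), fun j _ => absurd j.isLt (by omega)⟩
  by_cases hi : (i : ℕ) = 0
  · refine ⟨cuts ⟨0, hpos⟩ - 1, fun j hj => by omega, fun j _ => ?_⟩
    linarith [hcuts.monotone (Fin.le_def.2 (Nat.zero_le j) : (⟨0, hpos⟩ : Fin (N - 1)) ≤ j)]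
  · have hlt : (i : ℕ) - 1 < N - 1 := by omega
    exact ⟨cuts ⟨i - 1, hlt⟩, fun j hj => hcuts.monotone (Fin.le_def.2 (by simp; omega)),
      fun j hj => hcuts (Fin.lt_def.2 (by simp; omega))⟩

lemma ordConnected_cutInterval (i : Fin N) : (cutInterval cuts i).OrdConnected :=
  ⟨fun _ ha _ hb _ hx =>
    ⟨fun j hj => (ha.1 j hj).trans hx.1, fun j hj => hx.2.trans_lt (hb.2 j hj)⟩⟩

lemma measurableSet_cutInterval (i : Fin N) : MeasurableSet (cutInterval cuts i) := by
  simp only [cutInterval, Set.ofPred_and, Set.ofPred_forall]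
  exact .inter (.iInter fun j => .iInter fun _ => measurableSet_Ici)
    (.iInter fun j => .iInter fun _ => measurableSet_Iio)

lemma exists_cutInterval_subset_of_forall_notMem {k : ℕ} (hk : 0 < k)
    {Gcuts : Fin (k - 1) → ℝ} (hG : Monotone Gcuts) {i : Fin N}
    (hne : (cutInterval cuts i).Nonempty) (h : ∀ c, Gcuts c ∉ cutInterval cuts i) :
    ∃ i', cutInterval cuts i ⊆ cutInterval Gcuts i' := by
  obtain ⟨t₀, ht₀⟩ := hne
  obtain ⟨i', hi'⟩ := exists_mem_cutInterval hk hG t₀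
  refine ⟨i', fun t ht => ⟨fun j hj => ?_, fun j hj => ?_⟩⟩
  · by_contra! hlt
    exact h j ((ordConnected_cutInterval i).out ht ht₀ ⟨hlt.le, hi'.1 j hj⟩)
  · by_contra! hle
    exact h j ((ordConnected_cutInterval i).out ht₀ ht ⟨(hi'.2 j hj).le, hle⟩)

open Classical in
def splitIntervals (cuts : Fin (N - 1) → ℝ) {k : ℕ} (Gcuts : Fin (k - 1) → ℝ) : Finset (Fin N) :=
  {i | ¬∃ i', cutInterval cuts i ⊆ cutInterval Gcuts i'}

lemma card_splitIntervals_le (hcuts : StrictMono cuts) {k : ℕ} (hk : 0 < k)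
    {Gcuts : Fin (k - 1) → ℝ} (hG : Monotone Gcuts) :
    #(splitIntervals cuts Gcuts) ≤ k - 1 := by
  classical
  calc #(splitIntervals cuts Gcuts)
      ≤ #(univ : Finset (Fin (k - 1))) := by
        refine card_le_card_of_forall_subsingleton (fun i c => Gcuts c ∈ cutInterval cuts i)
          (fun i hi => ?_) fun c _ i₁ hi₁ i₂ hi₂ => ?_
        · by_contra! h
          simp only [splitIntervals, mem_filter, mem_univ, true_and] at hi
          exact hi (exists_cutInterval_subset_of_forall_notMem hk hG
            (cutInterval_nonempty hcuts i) fun c hc => h c (mem_univ c) hc)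
        · by_contra hne
          exact Set.disjoint_left.1 (pairwise_disjoint_cutInterval hne) hi₁.2 hi₂.2
    _ = k - 1 := by simp

end CutInterval

namespace Grid

variable {R S : ℕ} (Γ : Grid R S)

def row (i : Fin R) : Set (ℝ × ℝ) := ⋃ j, Γ.cell i j

def col (j : Fin S) : Set (ℝ × ℝ) := ⋃ i, Γ.cell i j

lemma measurableSet_cell (i : Fin R) (j : Fin S) : MeasurableSet (Γ.cell i j) :=
  (measurable_fst (measurableSet_cutInterval j)).inter
    (measurable_snd (measurableSet_cutInterval i))

lemma measurableSet_row (i : Fin R) : MeasurableSet (Γ.row i) :=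
  .iUnion (Γ.measurableSet_cell i)

lemma measurableSet_col (j : Fin S) : MeasurableSet (Γ.col j) :=
  .iUnion fun i => Γ.measurableSet_cell i j

lemma pairwise_disjoint_cell_row (i : Fin R) : Pairwise (Disjoint on fun j => Γ.cell i j) :=
  fun _ _ h => Set.disjoint_left.2 fun _ hp hp' =>
    Set.disjoint_left.1 (pairwise_disjoint_cutInterval h) hp.1 hp'.1

lemma pairwise_disjoint_cell_col (j : Fin S) : Pairwise (Disjoint on fun i => Γ.cell i j) :=
  fun _ _ h => Set.disjoint_left.2 fun _ hp hp' =>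
    Set.disjoint_left.1 (pairwise_disjoint_cutInterval h) hp.2 hp'.2

lemma measureReal_row (μ : Measure (ℝ × ℝ)) [IsFiniteMeasure μ] (i : Fin R) :
    μ.real (Γ.row i) = ∑ j, gridPMF μ Γ i j :=
  measureReal_iUnion_fintype (Γ.pairwise_disjoint_cell_row i) (Γ.measurableSet_cell i)

lemma measureReal_col (μ : Measure (ℝ × ℝ)) [IsFiniteMeasure μ] (j : Fin S) :
    μ.real (Γ.col j) = ∑ i, gridPMF μ Γ i j :=
  measureReal_iUnion_fintype (Γ.pairwise_disjoint_cell_col j) fun i => Γ.measurableSet_cell i j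

end Grid

section BoundaryMass

variable {R S k l : ℕ} {Γ : Grid R S} {G : Grid k l}

lemma IsSplit.mem_splitIntervals {i : Fin R} {j : Fin S} (h : IsSplit Γ G i j) :
    i ∈ splitIntervals Γ.rowCuts G.rowCuts ∨ j ∈ splitIntervals Γ.colCuts G.colCuts := by
  by_contra! h'
  simp only [splitIntervals, mem_filter, mem_univ, true_and, not_not] at h'
  obtain ⟨⟨i', hi'⟩, j', hj'⟩ := h'
  exact h ⟨i', j', fun p hp => ⟨hj' hp.1, hi' hp.2⟩⟩

open Classical in
lemma boundaryMass_le (f : Set (ℝ × ℝ) → ℝ) (hf : ∀ i j, 0 ≤ f (Γ.cell i j)) :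
    boundaryMass f Γ G ≤
      ∑ i ∈ splitIntervals Γ.rowCuts G.rowCuts, ∑ j, f (Γ.cell i j) +
        ∑ j ∈ splitIntervals Γ.colCuts G.colCuts, ∑ i, f (Γ.cell i j) := by
  calc boundaryMass f Γ G
      ≤ ∑ i, ∑ j, ((if i ∈ splitIntervals Γ.rowCuts G.rowCuts then f (Γ.cell i j) else 0) +
          if j ∈ splitIntervals Γ.colCuts G.colCuts then f (Γ.cell i j) else 0) := by
        refine sum_le_sum fun i _ => sum_le_sum fun j _ => ?_
        have := hf i j
        by_cases hs : IsSplit Γ G i j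
        · rcases hs.mem_splitIntervals with h | h <;> split_ifs <;> linarith
        · split_ifs <;> linarith
    _ = _ := by
        simp only [sum_add_distrib]
        rw [sum_comm (f := fun i j => if j ∈ _ then f (Γ.cell i j) else 0)]
        simp only [sum_ite_irrel, sum_const_zero, sum_ite_mem, univ_inter]

end BoundaryMass

section Empirical

variable {n : ℕ} (ω : Fin n → ℝ × ℝ)

lemma empMeas_nonneg (A : Set (ℝ × ℝ)) : 0 ≤ empMeas ω A := by
  unfold empMeas
  positivity

lemma sum_empMeas_eq_empMeas_iUnion {ι : Type*} [Fintype ι] {A : ι → Set (ℝ × ℝ)}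
    (hA : Pairwise (Disjoint on A)) : ∑ i, empMeas ω (A i) = empMeas ω (⋃ i, A i) := by
  classical
  unfold empMeas
  rw [← sum_div, ← Nat.cast_sum, ← card_biUnion]
  · congr 3
    ext s
    simp
  · exact fun i _ i' _ h => disjoint_filter.2 fun s _ hs hs' =>
      Set.disjoint_left.1 (hA h) hs hs'

lemma boundaryMass_empMeas_le {R S k l : ℕ} (Γ : Grid R S) (G : Grid k l) (hk : 0 < k)
    (hl : 0 < l) {a b : ℝ} (ha : 0 ≤ a) (hb : 0 ≤ b)
    (hrow : ∀ i, empMeas ω (Γ.row i) ≤ a) (hcol : ∀ j, empMeas ω (Γ.col j) ≤ b) :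
    boundaryMass (empMeas ω) Γ G ≤ (k - 1) * a + (l - 1) * b := by
  calc boundaryMass (empMeas ω) Γ G
      ≤ ∑ i ∈ splitIntervals Γ.rowCuts G.rowCuts, ∑ j, empMeas ω (Γ.cell i j) +
          ∑ j ∈ splitIntervals Γ.colCuts G.colCuts, ∑ i, empMeas ω (Γ.cell i j) :=
        boundaryMass_le _ fun i j => empMeas_nonneg ω _
    _ ≤ ∑ _i ∈ splitIntervals Γ.rowCuts G.rowCuts, a +
          ∑ _j ∈ splitIntervals Γ.colCuts G.colCuts, b := by
        gcongr with i _ j _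
        · exact (sum_empMeas_eq_empMeas_iUnion ω (Γ.pairwise_disjoint_cell_row i)).trans_le
            (hrow i)
        · exact (sum_empMeas_eq_empMeas_iUnion ω (Γ.pairwise_disjoint_cell_col j)).trans_le
            (hcol j)
    _ ≤ (k - 1) * a + (l - 1) * b := by
        simp only [sum_const, nsmul_eq_mul]
        gcongr
        · rw [← Nat.cast_pred hk]
          exact_mod_cast card_splitIntervals_le Γ.rowCuts_mono hk G.rowCuts_mono.monotone
        · rw [← Nat.cast_pred hl]
          exact_mod_cast card_splitIntervals_le Γ.colCuts_mono hl G.colCuts_mono.monotone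

lemma boundaryMass_empMeas_le_four_div {k l m : ℕ} (Γ : Grid (k * m) (l * m)) (G : Grid k l)
    (hk : 0 < k) (hl : 0 < l) (hrow : ∀ i, empMeas ω (Γ.row i) ≤ 2 / (k * m : ℕ))
    (hcol : ∀ j, empMeas ω (Γ.col j) ≤ 2 / (l * m : ℕ)) :
    boundaryMass (empMeas ω) Γ G ≤ 4 / m := by
  push_cast at hrow hcol
  have hk₀ : (k : ℝ) ≠ 0 := by positivity
  have hl₀ : (l : ℝ) ≠ 0 := by positivity
  calc boundaryMass (empMeas ω) Γ G ≤ (k - 1) * (2 / (k * m)) + (l - 1) * (2 / (l * m)) :=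
        boundaryMass_empMeas_le ω Γ G hk hl (by positivity) (by positivity) hrow hcol
    _ ≤ k * (2 / (k * m)) + l * (2 / (l * m)) := by gcongr <;> linarith
    _ = 4 / m := by
        rw [← mul_div_assoc, ← mul_div_assoc, mul_div_mul_left _ _ hk₀,
          mul_div_mul_left _ _ hl₀]
        ring

end Empirical

section Chernoff

variable {Ω : Type*} [MeasurableSpace Ω] (μ : Measure Ω) [IsProbabilityMeasure μ] {A : Set Ω}

open Classical in
/-- Chernoff: Markov's inequality for `2 ^ #{i | ω i ∈ A}`, whose mean is `(1 + μ A) ^ n`;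
the constant `3` comes from `2 log 2 - 1 ≥ 1 / 3`. -/
lemma measureReal_two_mul_le_card_le (hA : MeasurableSet A) (n : ℕ) :
    (Measure.pi fun _ : Fin n => μ).real {ω | 2 * n * μ.real A ≤ #{i | ω i ∈ A}} ≤
      Real.exp (-(n * μ.real A) / 3) := by
  set p := μ.real A
  set f : Ω → ℝ := fun x => 1 + A.indicator 1 x
  have hprod : ∀ ω : Fin n → Ω, ∏ i, f (ω i) = 2 ^ #{i | ω i ∈ A} := by
    intro ω
    simp only [f, Set.indicator_apply, Pi.one_apply, add_ite, prod_ite, prod_const, add_zero,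
      one_pow, mul_one, one_add_one_eq_two]
  have hint : ∫ x, f x ∂μ = 1 + p := by
    rw [integral_add (integrable_const 1) ((integrable_const 1).indicator hA),
      integral_indicator_one hA]
    simp [p]
  have hf : ∀ x, 0 ≤ f x := fun x =>
    add_nonneg zero_le_one (Set.indicator_nonneg (fun _ _ => zero_le_one) x)
  have hmarkov := mul_meas_ge_le_integral_of_nonneg (f := fun ω : Fin n → Ω => ∏ i, f (ω i))
    (ae_of_all _ fun ω => prod_nonneg fun i _ => hf (ω i))
    (Integrable.fintype_prod (μ := fun _ : Fin n => μ) fun _ =>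
      (integrable_const 1).add ((integrable_const 1).indicator hA))
    ((2 : ℝ) ^ (2 * n * p))
  rw [integral_fintype_prod_eq_pow, hint, Fintype.card_fin] at hmarkov
  have hsub : {ω : Fin n → Ω | 2 * n * p ≤ #{i | ω i ∈ A}} ⊆
      {ω | (2 : ℝ) ^ (2 * n * p) ≤ ∏ i, f (ω i)} := fun ω hω => by
    rw [Set.mem_ofPred_eq, hprod, ← Real.rpow_natCast]
    exact Real.rpow_le_rpow_of_exponent_le one_le_two hω
  have hp : 0 ≤ n * p := by positivity
  calc _ ≤ (Measure.pi fun _ : Fin n => μ).real {ω | (2 : ℝ) ^ (2 * n * p) ≤ ∏ i, f (ω i)} :=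
        measureReal_mono hsub
    _ ≤ (1 + p) ^ n / (2 : ℝ) ^ (2 * n * p) := by
        rw [le_div_iff₀ (by positivity), mul_comm]
        exact hmarkov
    _ ≤ Real.exp p ^ n / Real.exp (Real.log 2 * (2 * n * p)) := by
        rw [Real.rpow_def_of_pos two_pos]
        gcongr
        linarith [Real.add_one_le_exp p]
    _ = Real.exp (n * p * (1 - 2 * Real.log 2)) := by
        rw [← Real.exp_nat_mul, ← Real.exp_sub]
        ring_nf
    _ ≤ Real.exp (-(n * p) / 3) := by
        gcongr
        nlinarith [Real.log_two_gt_d9]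

end Chernoff

open Classical in
lemma measure_two_div_lt_empMeas_le (μ : Measure (ℝ × ℝ)) [IsProbabilityMeasure μ]
    {A : Set (ℝ × ℝ)} (hA : MeasurableSet A) {r : ℝ} (hAr : μ.real A = 1 / r) (n : ℕ) :
    (Measure.pi fun _ : Fin n => μ) {ω | 2 / r < empMeas ω A} ≤
      ENNReal.ofReal (Real.exp (-n / (3 * r))) := by
  have hchernoff := measureReal_two_mul_le_card_le μ hA n
  rw [hAr] at hchernoff
  rw [← ofReal_measureReal (μ := Measure.pi fun _ : Fin n => μ)]
  refine ENNReal.ofReal_le_ofReal ((measureReal_mono fun ω hω => ?_).trans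
    (hchernoff.trans_eq (by congr 1; ring)))
  rcases n.eq_zero_or_pos with rfl | hn
  · simp
  · calc 2 * n * (1 / r) = 2 / r * n := by ring
      _ ≤ #{i | ω i ∈ A} := ((lt_div_iff₀ (by positivity)).1 hω).le

section UnionBound

variable {α : Type*} [MeasurableSpace α]

lemma measure_iUnion_le_ofReal_card_mul {ι : Type*} [Fintype ι] (P : Measure α)
    {A : ι → Set α} {δ : ℝ} (h : ∀ i, P (A i) ≤ ENNReal.ofReal δ) :
    P (⋃ i, A i) ≤ ENNReal.ofReal (Fintype.card ι * δ) := by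
  rw [ENNReal.ofReal_mul (Nat.cast_nonneg _), ENNReal.ofReal_natCast]
  calc P (⋃ i, A i) ≤ ∑ i, P (A i) := measure_iUnion_fintype_le P A
    _ ≤ ∑ _i : ι, ENNReal.ofReal δ := sum_le_sum fun i _ => h i
    _ = _ := by simp

lemma ofReal_one_sub_le_of_measure_compl_le {P : Measure α} [IsProbabilityMeasure P]
    {E : Set α} {δ : ℝ} (hδ : 0 ≤ δ) (h : P Eᶜ ≤ ENNReal.ofReal δ) :
    ENNReal.ofReal (1 - δ) ≤ P E := by
  rw [ENNReal.ofReal_sub _ hδ, ENNReal.ofReal_one, tsub_le_iff_right]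
  calc 1 = P (E ∪ Eᶜ) := by rw [Set.union_compl_self, measure_univ]
    _ ≤ P E + P Eᶜ := measure_union_le E Eᶜ
    _ ≤ P E + ENNReal.ofReal δ := by gcongr

end UnionBound

section Equipartition

variable {μ : Measure (ℝ × ℝ)} [IsProbabilityMeasure μ] {R S : ℕ} {Γ : Grid R S}

lemma IsEquipartition.measure_exists_row_lt_empMeas_le (hΓ : IsEquipartition μ Γ) (n : ℕ) :
    (Measure.pi fun _ : Fin n => μ) {ω | ∃ i, 2 / R < empMeas ω (Γ.row i)} ≤
      ENNReal.ofReal (R * Real.exp (-n / (3 * R))) := by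
  rw [Set.ofPred_exists]
  simpa using measure_iUnion_le_ofReal_card_mul _ fun i =>
    measure_two_div_lt_empMeas_le μ (Γ.measurableSet_row i) (by rw [Γ.measureReal_row, hΓ.1 i]) n

lemma IsEquipartition.measure_exists_col_lt_empMeas_le (hΓ : IsEquipartition μ Γ) (n : ℕ) :
    (Measure.pi fun _ : Fin n => μ) {ω | ∃ j, 2 / S < empMeas ω (Γ.col j)} ≤
      ENNReal.ofReal (S * Real.exp (-n / (3 * S))) := by
  rw [Set.ofPred_exists]
  simpa using measure_iUnion_le_ofReal_card_mul _ fun j =>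
    measure_two_div_lt_empMeas_le μ (Γ.measurableSet_col j) (by rw [Γ.measureReal_col, hΓ.2 j]) n

end Equipartition

theorem stmt5_general (μ : Measure (ℝ × ℝ)) [IsProbabilityMeasure μ]
    (k l m : ℕ) (hk : 2 ≤ k) (hl : 2 ≤ l)
    (Γ : Grid (k * m) (l * m)) (hΓ : IsEquipartition μ Γ) (n : ℕ) :
    ENNReal.ofReal
        (1 - (l * m : ℝ) * Real.exp (-(n : ℝ) / (3 * (l * m : ℝ)))
           - (k * m : ℝ) * Real.exp (-(n : ℝ) / (3 * (k * m : ℝ)))) ≤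
      (Measure.pi fun _ : Fin n => μ)
        {ω | ∀ G : Grid k l, boundaryMass (empMeas ω) Γ G ≤ 4 / (m : ℝ)} := by
  set E := {ω : Fin n → ℝ × ℝ | (∀ i, empMeas ω (Γ.row i) ≤ 2 / (k * m : ℕ)) ∧
    ∀ j, empMeas ω (Γ.col j) ≤ 2 / (l * m : ℕ)}
  have hE : E ⊆ {ω | ∀ G : Grid k l, boundaryMass (empMeas ω) Γ G ≤ 4 / (m : ℝ)} :=
    fun ω hω G => boundaryMass_empMeas_le_four_div ω Γ G (by omega) (by omega) hω.1 hω.2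
  have hEc : Eᶜ ⊆ {ω | ∃ i, 2 / (k * m : ℕ) < empMeas ω (Γ.row i)} ∪
      {ω | ∃ j, 2 / (l * m : ℕ) < empMeas ω (Γ.col j)} := fun ω hω => by
    simpa only [E, Set.mem_compl_iff, Set.mem_union, Set.mem_ofPred_eq, not_and_or, not_forall,
      not_le] using hω
  have hbad : (Measure.pi fun _ : Fin n => μ) Eᶜ ≤
      ENNReal.ofReal ((k * m : ℕ) * Real.exp (-n / (3 * (k * m : ℕ))) +
        (l * m : ℕ) * Real.exp (-n / (3 * (l * m : ℕ)))) := by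
    rw [ENNReal.ofReal_add (by positivity) (by positivity)]
    exact (measure_mono hEc).trans ((measure_union_le _ _).trans (add_le_add
      (hΓ.measure_exists_row_lt_empMeas_le n) (hΓ.measure_exists_col_lt_empMeas_le n)))
  calc _ = ENNReal.ofReal (1 - ((k * m : ℕ) * Real.exp (-n / (3 * (k * m : ℕ))) +
        (l * m : ℕ) * Real.exp (-n / (3 * (l * m : ℕ))))) := by push_cast; ring_nf
    _ ≤ _ := ofReal_one_sub_le_of_measure_compl_le (by positivity) hbad
    _ ≤ _ := measure_mono hE

theorem stmt5 (μ : Measure (ℝ × ℝ)) [IsProbabilityMeasure μ]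
    (k l m : ℕ) (hk : 2 ≤ k) (hl : 2 ≤ l) (hm : 1 ≤ m)
    (Γ : Grid (k * m) (l * m)) (hΓ : IsEquipartition μ Γ) (n : ℕ) :
    ENNReal.ofReal
        (1 - (l * m : ℝ) * Real.exp (-(n : ℝ) / (3 * (l * m : ℝ)))
           - (k * m : ℝ) * Real.exp (-(n : ℝ) / (3 * (k * m : ℝ)))) ≤
      (Measure.pi fun _ : Fin n => μ)
        {ω | ∀ G : Grid k l, boundaryMass (empMeas ω) Γ G ≤ 4 / (m : ℝ)} :=
  stmt5_general μ k l m hk hl Γ hΓ n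
end
end

section
/- There is a universal constant A > 0 with the following property. Let p and q be probability mass functions on {1,…,k}×{1,…,ℓ} with k, ℓ ≥ 2, and suppose D_TV(p,q) ≤ δ for some δ with 0 < δ ≤ 1/4. Then |I(p) − I(q)| ≤ A·δ·log₂(min(k,ℓ)/δ). -/
/-!
With `η t = -t log t`, in nats `I(p) = H(X) - H(X | Y)`, where `X` is the coordinate with the
smaller range `k` and `H(X | Y) = ∑_y c(y) H(p(· | y))`. Both terms are compared entrywise via
the modulus of continuity `|η x - η y| ≤ η |x - y| + |x - y|` on `[0, 1]`. The resulting sums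
`∑ w η(x)` are bounded by Jensen's inequality for the concave `η` by `m log (W / m)`, where
`m = ∑ w x = O(δ)` is the total (weighted) deviation and `W = ∑ w` the total weight, and
`m log (W / m) ≤ m log (W / δ) + δ`. For `H(X | Y)` the weights are `c_q(y)`, repeated over the
`k` values of `X`, so `W = k`: this is why only `min(k, ℓ)` enters the bound.
-/

open MeasureTheory Finset

noncomputable section

/-- Total variation distance between two pmfs on `Fin r × Fin c`. -/
def tvDist {r c : ℕ} (p q : Fin r → Fin c → ℝ) : ℝ :=
  (∑ i, ∑ j, |p i j - q i j|) / 2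

open Real

lemma abs_negMulLog_sub_le_of_le {x y : ℝ} (hy : 0 ≤ y) (hyx : y ≤ x) (hx : x ≤ 1) :
    |negMulLog x - negMulLog y| ≤ negMulLog (x - y) + (x - y) := by
  rcases hy.eq_or_lt with rfl | hy
  · simpa [abs_of_nonneg (negMulLog_nonneg (by linarith : 0 ≤ x) hx)] using by linarith
  have hx0 : 0 < x := hy.trans_le hyx
  have hlogx : log x ≤ 0 := log_nonpos hx0.le hx
  have hsplit : negMulLog y - negMulLog x = (x - y) * log x + y * log (x / y) := by
    simp only [negMulLog, log_div hx0.ne' hy.ne']; ring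
  have hgap : |(x - y) * log x| ≤ negMulLog (x - y) := by
    rw [abs_of_nonpos (mul_nonpos_of_nonneg_of_nonpos (by linarith) hlogx), negMulLog]
    rcases (sub_nonneg.2 hyx).eq_or_lt with h | h
    · simp [← h]
    · nlinarith [log_le_log h (by linarith : x - y ≤ x)]
  have hratio : |y * log (x / y)| ≤ x - y := by
    have h1 : 1 ≤ x / y := by rw [le_div_iff₀ hy]; linarith
    rw [abs_of_nonneg (mul_nonneg hy.le (log_nonneg h1))]
    calc y * log (x / y) ≤ y * (x / y - 1) :=
          mul_le_mul_of_nonneg_left (log_le_sub_one_of_pos (by positivity)) hy.le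
      _ = x - y := by field_simp
  calc |negMulLog x - negMulLog y| = |(x - y) * log x + y * log (x / y)| := by
        rw [abs_sub_comm, hsplit]
    _ ≤ _ := (abs_add_le _ _).trans (add_le_add hgap hratio)

lemma abs_negMulLog_sub_le {x y : ℝ} (hx₀ : 0 ≤ x) (hx₁ : x ≤ 1) (hy₀ : 0 ≤ y) (hy₁ : y ≤ 1) :
    |negMulLog x - negMulLog y| ≤ negMulLog |x - y| + |x - y| := by
  rcases le_total y x with h | h
  · rw [abs_of_nonneg (sub_nonneg.2 h)]
    exact abs_negMulLog_sub_le_of_le hy₀ h hx₁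
  · rw [abs_sub_comm x, abs_of_nonneg (sub_nonneg.2 h), abs_sub_comm]
    exact abs_negMulLog_sub_le_of_le hx₀ h hy₁

section Entropy

variable {ι : Type*} [Fintype ι]

def entropy (u : ι → ℝ) : ℝ := ∑ i, negMulLog (u i)

lemma entropy_nonneg {u : ι → ℝ} (hu₀ : ∀ i, 0 ≤ u i) (hu₁ : ∀ i, u i ≤ 1) :
    0 ≤ entropy u :=
  sum_nonneg fun i _ => negMulLog_nonneg (hu₀ i) (hu₁ i)

lemma abs_entropy_sub_le {u v : ι → ℝ} (hu₀ : ∀ i, 0 ≤ u i) (hu₁ : ∀ i, u i ≤ 1)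
    (hv₀ : ∀ i, 0 ≤ v i) (hv₁ : ∀ i, v i ≤ 1) :
    |entropy u - entropy v| ≤ ∑ i, (negMulLog |u i - v i| + |u i - v i|) := by
  rw [entropy, entropy, ← sum_sub_distrib]
  exact (abs_sum_le_sum_abs _ _).trans
    (sum_le_sum fun i _ => abs_negMulLog_sub_le (hu₀ i) (hu₁ i) (hv₀ i) (hv₁ i))

lemma sum_mul_negMulLog_le {w x : ι → ℝ} (hw : ∀ i, 0 ≤ w i) (hx : ∀ i, 0 ≤ x i) :
    ∑ i, w i * negMulLog (x i) ≤ (∑ i, w i * x i) * log ((∑ i, w i) / ∑ i, w i * x i) := by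
  set W := ∑ i, w i
  set S := ∑ i, w i * x i
  have hW : 0 ≤ W := sum_nonneg fun i _ => hw i
  rcases hW.eq_or_lt with hW | hW
  · have hw0 : ∀ i, w i = 0 := fun i => (sum_eq_zero_iff_of_nonneg fun i _ => hw i).1 hW.symm i
      (mem_univ i)
    simp [S, hw0]
  have jensen := concaveOn_negMulLog.le_map_sum (t := univ) (w := fun i => w i / W) (p := x)
    (fun i _ => div_nonneg (hw i) hW.le) (by rw [← sum_div, div_self hW.ne'])
    (fun i _ => Set.mem_Ici.2 (hx i))
  simp only [smul_eq_mul, div_mul_eq_mul_div, ← sum_div] at jensen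
  calc ∑ i, w i * negMulLog (x i) ≤ W * negMulLog (S / W) := by
        rwa [div_le_iff₀' hW] at jensen
    _ = S * log (W / S) := by
        rw [negMulLog, ← inv_div, log_inv]; field_simp [hW.ne']

lemma mul_log_div_le {t m δ B : ℝ} (ht : 0 ≤ t) (htm : t ≤ m) (hδ : 0 < δ) (hδB : δ ≤ B) :
    t * log (B / t) ≤ m * log (B / δ) + δ := by
  have hB : 0 < B := hδ.trans_le hδB
  have hlog : 0 ≤ log (B / δ) := log_nonneg (by rw [le_div_iff₀ hδ]; linarith)
  rcases ht.eq_or_lt with rfl | ht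
  · simpa using add_nonneg (mul_nonneg htm hlog) hδ.le
  have hsplit : log (B / t) = log (B / δ) + log (δ / t) := by
    rw [← log_mul (by positivity) (by positivity), div_mul_div_cancel₀ hδ.ne']
  have hδt : t * log (δ / t) ≤ δ - t := by
    calc t * log (δ / t) ≤ t * (δ / t - 1) :=
          mul_le_mul_of_nonneg_left (log_le_sub_one_of_pos (by positivity)) ht.le
      _ = δ - t := by field_simp
  rw [hsplit, mul_add]
  nlinarith [mul_le_mul_of_nonneg_right htm hlog]

lemma sum_mul_negMulLog_le_of_le {w x : ι → ℝ} (hw : ∀ i, 0 ≤ w i) (hx : ∀ i, 0 ≤ x i)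
    {B m δ : ℝ} (hB : ∑ i, w i ≤ B) (hm : ∑ i, w i * x i ≤ m) (hδ : 0 < δ) (hδB : δ ≤ B) :
    ∑ i, w i * negMulLog (x i) ≤ m * log (B / δ) + δ := by
  set S := ∑ i, w i * x i
  have hS : 0 ≤ S := sum_nonneg fun i _ => mul_nonneg (hw i) (hx i)
  have hWB : S * log ((∑ i, w i) / S) ≤ S * log (B / S) := by
    rcases hS.eq_or_lt with h | h
    · simp [← h]
    obtain ⟨i, -, hi⟩ := exists_lt_of_sum_lt (by simpa using h : ∑ _i : ι, (0 : ℝ) < S)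
    have hwi : 0 < w i := (hw i).lt_of_ne (by rintro hwi; simp [← hwi] at hi)
    have hW : 0 < ∑ i, w i := hwi.trans_le (single_le_sum (fun i _ => hw i) (mem_univ i))
    exact mul_le_mul_of_nonneg_left
      (log_le_log (by positivity) (div_le_div_of_nonneg_right hB h.le)) h.le
  exact (sum_mul_negMulLog_le hw hx).trans (hWB.trans (mul_log_div_le hS hm hδ hδB))

end Entropy

section Normalize

variable {ι : Type*} [Fintype ι] {a b : ι → ℝ}

lemma div_sum_nonneg (ha : ∀ i, 0 ≤ a i) (i : ι) : 0 ≤ a i / ∑ j, a j :=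
  div_nonneg (ha i) (sum_nonneg fun j _ => ha j)

lemma div_sum_le_one (ha : ∀ i, 0 ≤ a i) (i : ι) : a i / ∑ j, a j ≤ 1 :=
  div_le_one_of_le₀ (single_le_sum (fun j _ => ha j) (mem_univ i)) (sum_nonneg fun j _ => ha j)

lemma sum_mul_div_sum (ha : ∀ i, 0 ≤ a i) (i : ι) : (∑ j, a j) * (a i / ∑ j, a j) = a i := by
  rcases eq_or_ne (∑ j, a j) 0 with h | h
  · rw [h, zero_mul, ((sum_eq_zero_iff_of_nonneg fun j _ => ha j).1 h i (mem_univ i))]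
  · exact mul_div_cancel₀ _ h

lemma sum_div_sum_le_one : ∑ i, a i / ∑ j, a j ≤ 1 := by
  rw [← sum_div]; exact div_self_le_one _

lemma entropy_div_sum_le_log_card (ha : ∀ i, 0 ≤ a i) :
    entropy (fun i => a i / ∑ j, a j) ≤ log (Fintype.card ι) := by
  have h := sum_mul_negMulLog_le (fun _ => zero_le_one) (div_sum_nonneg ha)
  simp only [one_mul, sum_const, card_univ, nsmul_eq_mul, mul_one, ← sum_div] at h
  rcases eq_or_ne (∑ j, a j) 0 with h0 | h0
  · simpa [entropy, h0] using log_natCast_nonneg _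
  · simpa [entropy, div_self h0] using h

lemma sum_mul_abs_div_sum_sub_le (ha : ∀ i, 0 ≤ a i) (hb : ∀ i, 0 ≤ b i) :
    ∑ i, (∑ j, b j) * |a i / ∑ j, a j - b i / ∑ j, b j|
      ≤ ∑ i, |a i - b i| + |∑ j, a j - ∑ j, b j| := by
  set sa := ∑ j, a j
  set sb := ∑ j, b j
  have hsb : 0 ≤ sb := sum_nonneg fun j _ => hb j
  -- `sum_mul_div_sum` needs no `sa ≠ 0`: a vanishing sum of nonnegative terms forces `a = 0`
  have hentry : ∀ i, sb * |a i / sa - b i / sb| ≤ |a i - b i| + a i / sa * |sa - sb| := by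
    intro i
    have hna : sa * (a i / sa) = a i := sum_mul_div_sum ha i
    have hnb : sb * (b i / sb) = b i := sum_mul_div_sum hb i
    calc sb * |a i / sa - b i / sb| = |(a i - b i) + a i / sa * (sb - sa)| := by
          rw [← abs_of_nonneg hsb, ← abs_mul, abs_of_nonneg hsb]
          congr 1
          linear_combination hna - hnb
      _ ≤ |a i - b i| + |a i / sa * (sb - sa)| := abs_add_le _ _
      _ = |a i - b i| + a i / sa * |sa - sb| := by
          rw [abs_mul, abs_of_nonneg (div_sum_nonneg ha i), abs_sub_comm sb]
  calc ∑ i, sb * |a i / sa - b i / sb| ≤ ∑ i, (|a i - b i| + a i / sa * |sa - sb|) :=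
        sum_le_sum fun i _ => hentry i
    _ = ∑ i, |a i - b i| + (∑ i, a i / sa) * |sa - sb| := by rw [sum_add_distrib, sum_mul]
    _ ≤ ∑ i, |a i - b i| + |sa - sb| := by
        gcongr; exact mul_le_of_le_one_left (abs_nonneg _) sum_div_sum_le_one

lemma abs_mul_entropy_div_sum_sub_le (ha : ∀ i, 0 ≤ a i) (hb : ∀ i, 0 ≤ b i) :
    |(∑ j, a j) * entropy (fun i => a i / ∑ j, a j)
        - (∑ j, b j) * entropy (fun i => b i / ∑ j, b j)|
      ≤ |∑ j, a j - ∑ j, b j| * log (Fintype.card ι)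
        + (∑ j, b j) * ∑ i, (negMulLog |a i / ∑ j, a j - b i / ∑ j, b j|
          + |a i / ∑ j, a j - b i / ∑ j, b j|) := by
  set sa := ∑ j, a j
  set sb := ∑ j, b j
  have hsb : 0 ≤ sb := sum_nonneg fun j _ => hb j
  have hHa := entropy_nonneg (div_sum_nonneg ha) (div_sum_le_one ha)
  calc |sa * entropy (fun i => a i / sa) - sb * entropy (fun i => b i / sb)|
      = |(sa - sb) * entropy (fun i => a i / sa)
          + sb * (entropy (fun i => a i / sa) - entropy (fun i => b i / sb))| := by
        congr 1; ring
    _ ≤ |sa - sb| * entropy (fun i => a i / sa)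
          + sb * |entropy (fun i => a i / sa) - entropy (fun i => b i / sb)| := by
        have h := abs_add_le ((sa - sb) * entropy (fun i => a i / sa))
          (sb * (entropy (fun i => a i / sa) - entropy (fun i => b i / sb)))
        rwa [abs_mul, abs_mul, abs_of_nonneg hHa, abs_of_nonneg hsb] at h
    _ ≤ _ := by
        gcongr
        · exact entropy_div_sum_le_log_card ha
        · exact abs_entropy_sub_le (div_sum_nonneg ha) (div_sum_le_one ha)
            (div_sum_nonneg hb) (div_sum_le_one hb)

end Normalize

section MutualInformation

variable {ι κ : Type*} [Fintype ι] [Fintype κ]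

def condEntropy (p : ι → κ → ℝ) : ℝ :=
  ∑ j, (∑ i, p i j) * entropy (fun i => p i j / ∑ i', p i' j)

lemma MI_mul_log_two {k l : ℕ} (p : Fin k → Fin l → ℝ) (hp : ∀ i j, 0 ≤ p i j) :
    MI p * log 2 = entropy (fun i => ∑ j, p i j) - condEntropy p := by
  have hterm : ∀ i j, (if p i j = 0 then 0
      else p i j * logb 2 (p i j / ((∑ j', p i j') * ∑ i', p i' j))) * log 2
        = -(p i j * log (∑ j', p i j')) + p i j * log (p i j / ∑ i', p i' j) := by
    intro i j
    split_ifs with h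
    · simp [h]
    have hpij : 0 < p i j := (hp i j).lt_of_ne' h
    have hr : 0 < ∑ j', p i j' := hpij.trans_le (single_le_sum (fun j' _ => hp i j') (mem_univ j))
    have hc : 0 < ∑ i', p i' j := hpij.trans_le (single_le_sum (fun i' _ => hp i' j) (mem_univ i))
    rw [logb, log_div hpij.ne' (by positivity), log_mul hr.ne' hc.ne', log_div hpij.ne' hc.ne']
    field_simp
    ring
  have hrow : ∀ i, negMulLog (∑ j, p i j) = ∑ j, -(p i j * log (∑ j', p i j')) := by
    intro i
    rw [negMulLog, sum_neg_distrib, ← sum_mul, neg_mul]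
  have hcol : ∀ j, (∑ i', p i' j) * entropy (fun i => p i j / ∑ i', p i' j)
      = -∑ i, p i j * log (p i j / ∑ i', p i' j) := by
    intro j
    rw [entropy, mul_sum, ← sum_neg_distrib]
    refine sum_congr rfl fun i _ => ?_
    rw [negMulLog, neg_mul, mul_neg, ← mul_assoc, sum_mul_div_sum (fun i => hp i j) i]
  calc MI p * log 2
      = ∑ i, ∑ j, (-(p i j * log (∑ j', p i j')) + p i j * log (p i j / ∑ i', p i' j)) := by
        rw [MI, sum_mul]
        exact sum_congr rfl fun i _ => by rw [sum_mul]; exact sum_congr rfl fun j _ => hterm i j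
    _ = entropy (fun i => ∑ j, p i j) - condEntropy p := by
        rw [condEntropy, sum_congr rfl fun j _ => hcol j, entropy]
        simp only [hrow, sum_add_distrib, sum_neg_distrib, sub_neg_eq_add]
        rw [sum_comm (f := fun i j => p i j * log (p i j / ∑ i', p i' j))]

lemma sum_abs_sum_sub_le (p q : ι → κ → ℝ) :
    ∑ i, |∑ j, p i j - ∑ j, q i j| ≤ ∑ i, ∑ j, |p i j - q i j| :=
  sum_le_sum fun i _ => by rw [← sum_sub_distrib]; exact abs_sum_le_sum_abs _ _

lemma abs_entropy_sum_sub_le {p q : ι → κ → ℝ} (hp : ∀ i j, 0 ≤ p i j)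
    (hp1 : ∑ i, ∑ j, p i j = 1) (hq : ∀ i j, 0 ≤ q i j) (hq1 : ∑ i, ∑ j, q i j = 1) {ε δ : ℝ}
    (hpq : ∑ i, ∑ j, |p i j - q i j| ≤ ε) (hδ : 0 < δ) (hδι : δ ≤ Fintype.card ι) :
    |entropy (fun i => ∑ j, p i j) - entropy (fun i => ∑ j, q i j)|
      ≤ ε * log (Fintype.card ι / δ) + δ + ε := by
  have hrow_le_one {r : ι → κ → ℝ} (hr : ∀ i j, 0 ≤ r i j) (hr1 : ∑ i, ∑ j, r i j = 1) (i : ι) :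
      ∑ j, r i j ≤ 1 :=
    hr1 ▸ single_le_sum (fun i _ => sum_nonneg fun j _ => hr i j) (mem_univ i)
  have hrows := (sum_abs_sum_sub_le p q).trans hpq
  calc _ ≤ ∑ i, (negMulLog |∑ j, p i j - ∑ j, q i j| + |∑ j, p i j - ∑ j, q i j|) :=
        abs_entropy_sub_le (fun i => sum_nonneg fun j _ => hp i j) (hrow_le_one hp hp1)
          (fun i => sum_nonneg fun j _ => hq i j) (hrow_le_one hq hq1)
    _ = ∑ i, 1 * negMulLog |∑ j, p i j - ∑ j, q i j| + ∑ i, |∑ j, p i j - ∑ j, q i j| := by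
        simp only [one_mul, sum_add_distrib]
    _ ≤ _ := add_le_add (sum_mul_negMulLog_le_of_le (fun _ => zero_le_one)
        (fun _ => abs_nonneg _) (by simp) (by simpa using hrows) hδ hδι) hrows

lemma abs_condEntropy_sub_le {p q : ι → κ → ℝ} (hp : ∀ i j, 0 ≤ p i j)
    (hq : ∀ i j, 0 ≤ q i j) (hq1 : ∑ i, ∑ j, q i j = 1) {ε δ : ℝ}
    (hpq : ∑ i, ∑ j, |p i j - q i j| ≤ ε) (hδ : 0 < δ) (hδι : δ ≤ Fintype.card ι) :
    |condEntropy p - condEntropy q|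
      ≤ ε * log (Fintype.card ι) + (2 * ε * log (Fintype.card ι / δ) + δ) + 2 * ε := by
  have hcols : ∑ j, |∑ i, p i j - ∑ i, q i j| ≤ ε := by
    simpa only [sum_comm (γ := ι)] using
      (sum_abs_sum_sub_le (fun j i => p i j) (fun j i => q i j)).trans (by rwa [sum_comm])
  have hmass : ∑ j, ∑ i, (∑ i', q i' j) * |p i j / ∑ i', p i' j - q i j / ∑ i', q i' j|
      ≤ 2 * ε :=
    calc _ ≤ ∑ j, (∑ i, |p i j - q i j| + |∑ i, p i j - ∑ i, q i j|) :=
          sum_le_sum fun j _ => sum_mul_abs_div_sum_sub_le (fun i => hp i j) (fun i => hq i j)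
      _ ≤ 2 * ε := by rw [sum_add_distrib, sum_comm]; linarith
  have hweights : ∑ z : κ × ι, ∑ i', q i' z.1 = Fintype.card ι := by
    simp only [Fintype.sum_prod_type, sum_const, card_univ, nsmul_eq_mul]
    rw [← mul_sum, sum_comm, hq1, mul_one]
  have hspread : ∑ j, ∑ i, (∑ i', q i' j) *
      negMulLog |p i j / ∑ i', p i' j - q i j / ∑ i', q i' j|
        ≤ 2 * ε * log (Fintype.card ι / δ) + δ := by
    have h := sum_mul_negMulLog_le_of_le (m := 2 * ε) (w := fun z : κ × ι => ∑ i', q i' z.1)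
      (x := fun z => |p z.2 z.1 / ∑ i', p i' z.1 - q z.2 z.1 / ∑ i', q i' z.1|)
      (fun z => sum_nonneg fun i _ => hq i z.1) (fun _ => abs_nonneg _) hweights.le
      (by rw [Fintype.sum_prod_type]; exact hmass) hδ hδι
    rw [Fintype.sum_prod_type] at h
    exact h
  have hlog : 0 ≤ log (Fintype.card ι) := log_natCast_nonneg _
  calc |condEntropy p - condEntropy q|
      ≤ ∑ j, |(∑ i, p i j) * entropy (fun i => p i j / ∑ i', p i' j)
          - (∑ i, q i j) * entropy (fun i => q i j / ∑ i', q i' j)| := by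
        rw [condEntropy, condEntropy, ← sum_sub_distrib]; exact abs_sum_le_sum_abs _ _
    _ ≤ ∑ j, (|∑ i, p i j - ∑ i, q i j| * log (Fintype.card ι) + (∑ i', q i' j) *
          ∑ i, (negMulLog |p i j / ∑ i', p i' j - q i j / ∑ i', q i' j|
            + |p i j / ∑ i', p i' j - q i j / ∑ i', q i' j|)) :=
        sum_le_sum fun j _ => abs_mul_entropy_div_sum_sub_le (fun i => hp i j) (fun i => hq i j)
    _ = (∑ j, |∑ i, p i j - ∑ i, q i j|) * log (Fintype.card ι)
          + ∑ j, ∑ i, (∑ i', q i' j) * negMulLog |p i j / ∑ i', p i' j - q i j / ∑ i', q i' j|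
          + ∑ j, ∑ i, (∑ i', q i' j) * |p i j / ∑ i', p i' j - q i j / ∑ i', q i' j| := by
        simp only [sum_add_distrib, sum_mul, mul_sum, mul_add, add_assoc]
    _ ≤ _ := by gcongr

end MutualInformation

lemma one_le_log_div {k : ℕ} (hk : 0 < k) {δ : ℝ} (hδ : 0 < δ) (hδ4 : δ ≤ 1 / 4) :
    1 ≤ log (k / δ) := by
  have hk1 : (1 : ℝ) ≤ k := by exact_mod_cast hk
  rw [le_log_iff_exp_le (by positivity), le_div_iff₀ hδ]
  nlinarith [exp_one_lt_d9]

lemma abs_MI_sub_le {k l : ℕ} (hk : 0 < k) {p q : Fin k → Fin l → ℝ} (hp : ∀ i j, 0 ≤ p i j)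
    (hp1 : ∑ i, ∑ j, p i j = 1) (hq : ∀ i j, 0 ≤ q i j) (hq1 : ∑ i, ∑ j, q i j = 1) {δ : ℝ}
    (hδ : 0 < δ) (hδ4 : δ ≤ 1 / 4) (htv : tvDist p q ≤ δ) :
    |MI p - MI q| ≤ 16 * δ * logb 2 (k / δ) := by
  have hk1 : (1 : ℝ) ≤ k := by exact_mod_cast hk
  have hpq : ∑ i, ∑ j, |p i j - q i j| ≤ 2 * δ := by rw [tvDist] at htv; linarith
  have hδk : δ ≤ Fintype.card (Fin k) := by rw [Fintype.card_fin]; linarith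
  have hrow := abs_entropy_sum_sub_le hp hp1 hq hq1 hpq hδ hδk
  have hcond := abs_condEntropy_sub_le hp hq hq1 hpq hδ hδk
  rw [Fintype.card_fin] at hrow hcond
  have hL : δ ≤ δ * log (k / δ) := le_mul_of_one_le_right hδ.le (one_le_log_div hk hδ hδ4)
  have hlogk : δ * log k ≤ δ * log (k / δ) := mul_le_mul_of_nonneg_left
    (log_le_log (by positivity) (le_div_self (by positivity) hδ (by linarith))) hδ.le
  have hlog2 : 0 < log 2 := log_pos one_lt_two
  have hnats : |MI p - MI q| * log 2 ≤ 16 * δ * log (k / δ) :=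
    calc |MI p - MI q| * log 2
        = |(entropy (fun i => ∑ j, p i j) - entropy (fun i => ∑ j, q i j))
            - (condEntropy p - condEntropy q)| := by
          rw [← abs_of_pos hlog2, ← abs_mul, sub_mul, MI_mul_log_two p hp, MI_mul_log_two q hq,
            sub_sub_sub_comm]
      _ ≤ |entropy (fun i => ∑ j, p i j) - entropy (fun i => ∑ j, q i j)|
            + |condEntropy p - condEntropy q| := abs_sub _ _
      _ ≤ 16 * δ * log (k / δ) := by linarith
  rw [logb, ← mul_div_assoc, le_div_iff₀ hlog2]
  exact hnats

lemma MI_swap {k l : ℕ} (p : Fin k → Fin l → ℝ) : MI (Function.swap p) = MI p := by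
  rw [MI, MI, sum_comm]
  simp only [Function.swap, mul_comm (∑ i', p i' _)]

lemma tvDist_swap {k l : ℕ} (p q : Fin k → Fin l → ℝ) :
    tvDist (Function.swap p) (Function.swap q) = tvDist p q := by
  rw [tvDist, tvDist, sum_comm]

theorem stmt8 :
    ∃ A > (0 : ℝ), ∀ (k l : ℕ), 2 ≤ k → 2 ≤ l →
      ∀ (p q : Fin k → Fin l → ℝ),
        (∀ i j, 0 ≤ p i j) → (∑ i, ∑ j, p i j) = 1 →
        (∀ i j, 0 ≤ q i j) → (∑ i, ∑ j, q i j) = 1 →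
        ∀ δ : ℝ, 0 < δ → δ ≤ 1 / 4 → tvDist p q ≤ δ →
          |MI p - MI q| ≤ A * δ * Real.logb 2 ((min k l : ℕ) / δ) := by
  refine ⟨16, by norm_num, fun k l hk hl p q hp hp1 hq hq1 δ hδ hδ4 htv => ?_⟩
  rcases le_total k l with hkl | hlk
  · rw [min_eq_left hkl]
    exact abs_MI_sub_le (by omega) hp hp1 hq hq1 hδ hδ4 htv
  · rw [min_eq_right hlk, ← MI_swap p, ← MI_swap q]
    exact abs_MI_sub_le (by omega) (fun j i => hp i j) (by rwa [sum_comm])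
      (fun j i => hq i j) (by rwa [sum_comm]) hδ hδ4 (by rwa [tvDist_swap])

end
end
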